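/- For each fixed row coordinate i, the mma swizzle is an involution in the column coordinate: for all natural numbers p, q, v, i, j, swz p q v i (swz p q v i j) = j. -/

import Mathlib

/-!
Writing the column as `j = (j / 2 ^ v) * 2 ^ v + j % 2 ^ v`, the swizzle XORs the high part
with the row phase `(i / 2 ^ p) % 2 ^ q` and keeps the low `v` bits. Since the two parts occupy
disjoint bits, this is `j ^^^ phase * 2 ^ v`, an XOR with a mask independent of `j`, hence an
involution.
-/

/-- The mma swizzle function: `swz p q v i j` is the shared-memory offset assigned to the
tensor element at coordinates `(i, j)`, where `p, q, v` are the base-2 logarithms of the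
swizzling parameters `per_phase`, `max_phase`, `vec`. -/
def swz (p q v i j : ℕ) : ℕ :=
  ((((i / 2 ^ p) % 2 ^ q) ^^^ (j / 2 ^ v)) * 2 ^ v) ^^^ (j % 2 ^ v)

namespace Nat

theorem mul_two_pow_xor_eq_add {v y : ℕ} (hy : y < 2 ^ v) (x : ℕ) :
    x * 2 ^ v ^^^ y = x * 2 ^ v + y := by
  apply eq_of_testBit_eq
  intro k
  rw [Nat.mul_comm, testBit_two_pow_mul_add _ hy, testBit_xor, testBit_two_pow_mul]
  by_cases hk : k < v
  · simp [hk, Nat.not_le_of_lt hk]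
  · have hy' : y < 2 ^ k := lt_of_lt_of_le hy (Nat.pow_le_pow_right two_pos (Nat.le_of_not_lt hk))
    simp [hk, Nat.le_of_not_lt hk, testBit_lt_two_pow hy']

theorem xor_mul_two_pow (a b v : ℕ) : (a ^^^ b) * 2 ^ v = a * 2 ^ v ^^^ b * 2 ^ v := by
  simpa only [shiftLeft_eq] using shiftLeft_xor_distrib (i := v)

end Nat

theorem swz_eq_xor (p q v i j : ℕ) : swz p q v i j = j ^^^ (i / 2 ^ p) % 2 ^ q * 2 ^ v := by
  rw [swz, Nat.xor_mul_two_pow, Nat.xor_assoc,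
    Nat.mul_two_pow_xor_eq_add (Nat.mod_lt _ (Nat.two_pow_pos v)), Nat.div_add_mod',
    Nat.xor_comm]

/-- For each fixed row coordinate `i`, the mma swizzle is an involution in the column
coordinate. -/
theorem swz_involutive (p q v i j : ℕ) :
    swz p q v i (swz p q v i j) = j := by
  rw [swz_eq_xor, swz_eq_xor, Nat.xor_xor_cancel_right]
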